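/- Let D be a pretriangulated category and let b →g a →h c →δ b[1] be a distinguished triangle with Hom(b, c) = 0 and Hom(b, c[-1]) = 0. Then every endomorphism p : a → a admits a unique endomorphism p_b : b → b with g ∘ p_b = p ∘ g; moreover, if p is idempotent (p ∘ p = p), then p_b is idempotent. -/

import Mathlib

/-!
Applying `Hom(b, -)` to the triangle and its inverse rotation gives an exact sequence
`Hom(b, c[-1]) → Hom(b, b) → Hom(b, a) → Hom(b, c)`, so when both ends vanish, composition
with `g` is a bijection `Hom(b, b) ≃ Hom(b, a)`. The lift of `p ∘ p = p` is then both
`p_b ∘ p_b` and `p_b`.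
-/

open CategoryTheory CategoryTheory.Limits CategoryTheory.Pretriangulated ZeroObject

universe v u

namespace CategoryTheory.Pretriangulated.Triangle

variable {C : Type*} [Category C] [Preadditive C] [HasZeroObject C] [HasShift C ℤ]
  [∀ n : ℤ, (CategoryTheory.shiftFunctor C n).Additive] [Pretriangulated C]
  (T : Triangle C) {X : C}

lemma eq_zero_of_comp_mor₁_eq_zero (hT : T ∈ distTriang C)
    (hX : ∀ f : X ⟶ T.obj₃⟦(-1 : ℤ)⟧, f = 0) (f : X ⟶ T.obj₁) (hf : f ≫ T.mor₁ = 0) :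
    f = 0 := by
  obtain ⟨e, rfl⟩ := coyoneda_exact₂ _ (inv_rot_of_distTriang _ hT) f hf
  exact (congrArg (· ≫ _) (hX e)).trans zero_comp

lemma cancel_mor₁ (hT : T ∈ distTriang C) (hX : ∀ f : X ⟶ T.obj₃⟦(-1 : ℤ)⟧, f = 0)
    {f₁ f₂ : X ⟶ T.obj₁} (h : f₁ ≫ T.mor₁ = f₂ ≫ T.mor₁) : f₁ = f₂ :=
  sub_eq_zero.mp <| T.eq_zero_of_comp_mor₁_eq_zero hT hX _ <| by
    rw [Preadditive.sub_comp, h, sub_self]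

lemma exists_comp_mor₁_eq (hT : T ∈ distTriang C) (hX : ∀ f : X ⟶ T.obj₃, f = 0)
    (f : X ⟶ T.obj₂) : ∃ f' : X ⟶ T.obj₁, f' ≫ T.mor₁ = f := by
  obtain ⟨f', hf'⟩ := coyoneda_exact₂ T hT f (hX _)
  exact ⟨f', hf'.symm⟩

end CategoryTheory.Pretriangulated.Triangle

variable {D : Type u} [Category.{v} D] [HasZeroObject D] [HasShift D ℤ] [Preadditive D]
  [∀ n : ℤ, (CategoryTheory.shiftFunctor D n).Additive] [Pretriangulated D]

theorem stmt6 (b a c : D) (g : b ⟶ a) (h : a ⟶ c) (δ : c ⟶ (b⟦(1 : ℤ)⟧ : D))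
    (hT : Triangle.mk g h δ ∈ distTriang D)
    (h0 : ∀ f : b ⟶ c, f = 0)
    (h1 : ∀ f : b ⟶ (c⟦(-1 : ℤ)⟧ : D), f = 0)
    (p : a ⟶ a) :
    (∃! pb : b ⟶ b, pb ≫ g = g ≫ p) ∧
      (p ≫ p = p → ∀ pb : b ⟶ b, pb ≫ g = g ≫ p → pb ≫ pb = pb) := by
  have cancel : ∀ {f₁ f₂ : b ⟶ b}, f₁ ≫ g = f₂ ≫ g → f₁ = f₂ :=
    (Triangle.mk g h δ).cancel_mor₁ hT h1
  obtain ⟨pb, hpb⟩ := (Triangle.mk g h δ).exists_comp_mor₁_eq hT h0 (g ≫ p)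
  refine ⟨⟨pb, hpb, fun q hq => cancel (hq.trans hpb.symm)⟩, fun hp q hq => cancel ?_⟩
  rw [Category.assoc, hq, reassoc_of% hq, hp]
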